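/- Let P be a 1-differential poset, let k and n be positive integers, and let d_{p_n} denote the last Smith entry of the integer matrix DU_n + kI. Then (n−1)!_{1,k} · (n+1+k) divides d_{p_n}. -/

import Mathlib

open Matrix

variable {α : Type*}

/-- The generalized factorial `ℓ!_{r,k} = (rℓ+k)(r(ℓ-1)+k)⋯(r·1+k)`. -/
def genFac (r k ℓ : ℕ) : ℕ := ∏ i ∈ Finset.range ℓ, (r * (i + 1) + k)

open Classical in
/-- The matrix of the up map `U_n : ℤP_n → ℤP_{n+1}`. -/
noncomputable def upMatZ [PartialOrder α] (rk : α → ℕ) (n : ℕ) :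
    Matrix {x : α // rk x = n + 1} {x : α // rk x = n} ℤ :=
  Matrix.of fun z x => if x.1 ⋖ z.1 then 1 else 0

/-- The matrix of `DU_n := D_{n+1} U_n` over `ℤ`. -/
noncomputable def duMatZ [PartialOrder α] (rk : α → ℕ)
    [∀ n : ℕ, Fintype {x : α // rk x = n}] (n : ℕ) :
    Matrix {x : α // rk x = n} {x : α // rk x = n} ℤ :=
  (upMatZ rk n)ᵀ * upMatZ rk n

open Classical

/-!
Let `M = DU_n + kI` and let `d` be its last Smith entry. The Smith form yields an integer matrix
`B` with `M B = d I`; as `M` is symmetric, `φ f = ⟨f, B e_x⟩` then satisfies `φ (M f) = d f(x)`.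
In a `1`-differential poset `DU - UD = I`, hence `D U^(i+1) = U^(i+1) D + (i+1) U^i`.

Take two chains `⊥ = X₀ ⋖ X₁ ⋖ ⋯` and `⊥ = Y₀ ⋖ Y₁ ⋖ ⋯` in which every element covers only its
predecessor, with `X₁ = Y₁` and `X₂ ≠ Y₂` (so `Xⱼ ≠ Yⱼ` for `j ≥ 2`), let `x = Xₙ` and
`ψᵢ = U^i δ_{Y_(n-i)}`. Then `M ψᵢ = ψᵢ₊₁ + (k+i+1) ψᵢ`, and since `(U^i f)(X_(m+i)) = f(X_m)`,
`ψᵢ(x) = [X_(n-i) = Y_(n-i)]` is `1` for `i = n-1` and `0` for smaller `i`; also `ψₙ = ψₙ₋₁`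
because `Y₁` is the only cover of `⊥`. So `βᵢ = φ ψᵢ` obeys
`βᵢ₊₁ = -(k+i+1) βᵢ` for `i < n-1` and `d = (n+1+k) βₙ₋₁`, which gives the divisibility.
-/

theorem mul_pow_succ_eq_of_mul_eq_mul_add_one {A : Type*} [Ring A] {a b : A}
    (h : a * b = b * a + 1) (i : ℕ) : a * b ^ (i + 1) = b ^ (i + 1) * a + (i + 1) • b ^ i := by
  induction i with
  | zero => simpa using h
  | succ i ih =>
    calc a * b ^ (i + 1 + 1) = (a * b ^ (i + 1)) * b := by rw [pow_succ, mul_assoc]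
      _ = b ^ (i + 1) * (a * b) + (i + 1) • b ^ (i + 1) := by
        rw [ih, add_mul, smul_mul_assoc, ← pow_succ, mul_assoc]
      _ = b ^ (i + 1 + 1) * a + (i + 1 + 1) • b ^ (i + 1) := by
        rw [h, mul_add, mul_one, ← mul_assoc, ← pow_succ, add_assoc, succ_nsmul' _ (i + 1)]

theorem exists_mul_eq_smul_one_of_smith {ι R : Type*} [Fintype ι] [DecidableEq ι] [CommRing R]
    {A P Q D : Matrix ι ι R} (hP : IsUnit P.det) (hPAQ : P * A * Q = D)
    (hdiag : ∀ i j, i ≠ j → D i j = 0) {i₀ : ι} (hdvd : ∀ i, D i i ∣ D i₀ i₀) :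
    ∃ B, A * B = D i₀ i₀ • 1 := by
  choose c hc using hdvd
  have hDc : D * diagonal c = D i₀ i₀ • 1 := by
    ext i j
    rw [mul_diagonal, Matrix.smul_apply, smul_eq_mul]
    by_cases hij : i = j
    · rw [hij, one_apply_eq, mul_one, ← hc]
    · rw [hdiag i j hij, one_apply_ne hij, zero_mul, mul_zero]
  have hAQ : A * Q = P⁻¹ * D := by
    rw [← hPAQ, ← one_mul (A * Q), ← nonsing_inv_mul P hP]
    simp only [mul_assoc]
  refine ⟨Q * diagonal c * P, ?_⟩
  rw [← mul_assoc, ← mul_assoc, hAQ, mul_assoc P⁻¹, hDc, Matrix.mul_smul, mul_one,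
    Matrix.smul_mul, nonsing_inv_mul P hP]

theorem mulVec_dotProduct_mulVec_single {ι R : Type*} [Fintype ι] [DecidableEq ι] [CommRing R]
    {M B : Matrix ι ι R} {d : R} (hM : M.IsSymm) (hMB : M * B = d • 1) (u : ι → R) (i : ι) :
    M *ᵥ u ⬝ᵥ B *ᵥ Pi.single i 1 = d * u i := by
  rw [dotProduct_comm, dotProduct_mulVec, ← mulVec_transpose, hM.eq, mulVec_mulVec, hMB,
    smul_mulVec, one_mulVec, smul_dotProduct, single_dotProduct, one_mul, smul_eq_mul]

lemma genFac_succ (r k ℓ : ℕ) : genFac r k (ℓ + 1) = genFac r k ℓ * (r * (ℓ + 1) + k) :=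
  Finset.prod_range_succ _ _

theorem genFac_mul_dvd_of_recurrence {β : ℕ → ℤ} {k n : ℕ} {d : ℤ} (hn : 0 < n)
    (hrec : ∀ i < n, β (i + 1) + (k + i + 1) * β i = if i + 1 = n then d else 0)
    (hstab : β n = β (n - 1)) :
    ((genFac 1 k (n - 1) * (n + 1 + k) : ℕ) : ℤ) ∣ d := by
  have hdvd : ∀ i < n, (genFac 1 k i : ℤ) ∣ β i := by
    intro i hi
    induction i with
    | zero => simp [genFac]
    | succ i ih =>
      have hβ : β (i + 1) = -(β i * ((1 * (i + 1) + k : ℕ) : ℤ)) := by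
        have h := hrec i (by omega)
        rw [if_neg (by omega)] at h
        push_cast
        linarith
      rw [hβ, genFac_succ, Nat.cast_mul]
      exact dvd_neg.2 (mul_dvd_mul (ih (by omega)) dvd_rfl)
  obtain ⟨m, rfl⟩ : ∃ m, n = m + 1 := ⟨n - 1, by omega⟩
  have hd := hrec m (by omega)
  rw [if_pos rfl, hstab, Nat.add_sub_cancel] at hd
  rw [← hd, Nat.add_sub_cancel, Nat.cast_mul,
    show β m + (k + m + 1) * β m = β m * ((m + 1 + 1 + k : ℕ) : ℤ) by push_cast; ring]
  exact mul_dvd_mul (hdvd m (by omega)) dvd_rfl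

def CoversExactly [Preorder α] (z x : α) : Prop :=
  x ⋖ z ∧ ∀ u, u ⋖ z → u = x

lemma CoversExactly.setOf_covBy_eq [Preorder α] {z x : α} (h : CoversExactly z x) :
    {c | c ⋖ z} = {x} :=
  Set.eq_singleton_iff_unique_mem.2 ⟨h.1, h.2⟩

lemma ne_of_coversExactly_of_ne [Preorder α] {X Y : ℕ → α}
    (hX : ∀ j, CoversExactly (X (j + 1)) (X j)) (hY : ∀ j, CoversExactly (Y (j + 1)) (Y j))
    {i j : ℕ} (hi : X i ≠ Y i) (hij : i ≤ j) : X j ≠ Y j := by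
  induction j, hij using Nat.le_induction with
  | base => exact hi
  | succ j _ ih => exact fun h => ih ((hX j).2 _ (h ▸ (hY j).1)).symm

lemma eq_bot_of_rk_eq_zero [PartialOrder α] [OrderBot α] (rk : α → ℕ)
    (hgrade : ∀ x y : α, x ⋖ y → rk y = rk x + 1)
    (hdown : ∀ x : α, x ≠ ⊥ → ∃ y : α, y ⋖ x) {z : α} (hz : rk z = 0) : z = ⊥ := by
  by_contra h
  obtain ⟨y, hy⟩ := hdown z h
  have := hgrade y z hy
  omega

def rankPart (rk : α → ℕ) (r : ℕ) : (α → ℤ) →ₗ[ℤ] ({x : α // rk x = r} → ℤ) :=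
  LinearMap.funLeft ℤ ℤ Subtype.val

lemma rankPart_apply (rk : α → ℕ) (r : ℕ) (f : α → ℤ) (x : {x : α // rk x = r}) :
    rankPart rk r f x = f x :=
  rfl

lemma sum_rank_indicator_eq_ncard (rk : α → ℕ) [∀ n : ℕ, Fintype {x : α // rk x = n}] {r : ℕ}
    {S : Set α} (hS : ∀ z ∈ S, rk z = r) :
    (∑ z : {x : α // rk x = r}, if z.1 ∈ S then (1 : ℤ) else 0) = S.ncard := by
  rw [Finset.sum_boole, ← Nat.card_coe_set_eq, Nat.card_congr (Equiv.subtypeSubtypeEquivSubtype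
    (fun hz => hS _ hz)).symm, Nat.card_eq_fintype_card, Fintype.card_subtype]

section GradedPoset

variable [PartialOrder α] (rk : α → ℕ) [∀ n : ℕ, Fintype {x : α // rk x = n}]

noncomputable def upOp : Module.End ℤ (α → ℤ) where
  toFun f x := ∑ w : {w : α // rk w = rk x - 1}, if w.1 ⋖ x then f w else 0
  map_add' f g := by
    funext x
    simp only [Pi.add_apply, ← Finset.sum_add_distrib]
    exact Finset.sum_congr rfl fun w _ => by split_ifs <;> simp
  map_smul' c f := by
    funext x
    simp only [Pi.smul_apply, smul_eq_mul, RingHom.id_apply, Finset.mul_sum, mul_ite, mul_zero]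

noncomputable def downOp : Module.End ℤ (α → ℤ) where
  toFun f x := ∑ z : {z : α // rk z = rk x + 1}, if x ⋖ z.1 then f z else 0
  map_add' f g := by
    funext x
    simp only [Pi.add_apply, ← Finset.sum_add_distrib]
    exact Finset.sum_congr rfl fun w _ => by split_ifs <;> simp
  map_smul' c f := by
    funext x
    simp only [Pi.smul_apply, smul_eq_mul, RingHom.id_apply, Finset.mul_sum, mul_ite, mul_zero]

lemma upOp_apply (f : α → ℤ) (x : α) :
    upOp rk f x = ∑ w : {w : α // rk w = rk x - 1}, if w.1 ⋖ x then f w else 0 :=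
  rfl

lemma downOp_apply (f : α → ℤ) (x : α) :
    downOp rk f x = ∑ z : {z : α // rk z = rk x + 1}, if x ⋖ z.1 then f z else 0 :=
  rfl

lemma rankPart_upOp (r : ℕ) (f : α → ℤ) :
    rankPart rk (r + 1) (upOp rk f) = upMatZ rk r *ᵥ rankPart rk r f := by
  funext z
  simp only [rankPart_apply, upOp_apply, mulVec, dotProduct, upMatZ, of_apply, ite_mul, one_mul,
    zero_mul]
  exact Fintype.sum_equiv (Equiv.subtypeEquivRight fun w => by rw [z.2, Nat.add_sub_cancel])
    _ _ fun _ => rfl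

lemma rankPart_downOp (r : ℕ) (f : α → ℤ) :
    rankPart rk r (downOp rk f) = (upMatZ rk r)ᵀ *ᵥ rankPart rk (r + 1) f := by
  funext x
  simp only [rankPart_apply, downOp_apply, mulVec, dotProduct, upMatZ, transpose_apply, of_apply,
    ite_mul, one_mul, zero_mul]
  exact Fintype.sum_equiv (Equiv.subtypeEquivRight fun w => by rw [x.2]) _ _ fun _ => rfl

lemma rankPart_downOp_upOp (r : ℕ) (f : α → ℤ) :
    rankPart rk r (downOp rk (upOp rk f)) = duMatZ rk r *ᵥ rankPart rk r f := by
  rw [rankPart_downOp, rankPart_upOp, mulVec_mulVec, duMatZ]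

lemma isSymm_duMatZ (r : ℕ) : (duMatZ rk r).IsSymm := by
  rw [duMatZ, IsSymm, transpose_mul, transpose_transpose]

lemma duMatZ_apply (hgrade : ∀ x y : α, x ⋖ y → rk y = rk x + 1) (r : ℕ)
    (x y : {x : α // rk x = r}) :
    duMatZ rk r x y = ({z : α | x.1 ⋖ z ∧ y.1 ⋖ z}.ncard : ℤ) := by
  rw [← sum_rank_indicator_eq_ncard rk fun z hz => by rw [hgrade x.1 z hz.1, x.2]]
  simp only [duMatZ, mul_apply, transpose_apply, upMatZ, of_apply, ite_zero_mul_ite_zero, mul_one]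
  congr!

lemma upMatZ_mul_transpose_apply (hgrade : ∀ x y : α, x ⋖ y → rk y = rk x + 1) (r : ℕ)
    (x y : {x : α // rk x = r + 1}) :
    (upMatZ rk r * (upMatZ rk r)ᵀ) x y = ({z : α | z ⋖ x.1 ∧ z ⋖ y.1}.ncard : ℤ) := by
  rw [← sum_rank_indicator_eq_ncard rk (r := r) fun z hz => by
    have := hgrade z x.1 hz.1; rw [x.2] at this; omega]
  simp only [mul_apply, transpose_apply, upMatZ, of_apply, ite_zero_mul_ite_zero, mul_one]
  congr!

lemma duMatZ_apply_eq_ncard_add_one (hgrade : ∀ x y : α, x ⋖ y → rk y = rk x + 1)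
    (hD1 : ∀ x : α, {z : α | x ⋖ z}.ncard = {y : α | y ⋖ x}.ncard + 1)
    (hD2 : ∀ x y : α, x ≠ y →
      {z : α | z ⋖ x ∧ z ⋖ y}.ncard = {z : α | x ⋖ z ∧ y ⋖ z}.ncard)
    (r : ℕ) (x y : {x : α // rk x = r}) :
    duMatZ rk r x y = {z : α | z ⋖ x.1 ∧ z ⋖ y.1}.ncard + (1 : Matrix _ _ ℤ) x y := by
  rw [duMatZ_apply rk hgrade]
  by_cases hxy : x = y
  · subst hxy
    simp only [and_self, hD1, one_apply_eq, Nat.cast_add, Nat.cast_one]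
  · rw [one_apply_ne hxy, hD2 x.1 y.1 fun h => hxy (Subtype.ext h), add_zero]

lemma duMatZ_zero (hgrade : ∀ x y : α, x ⋖ y → rk y = rk x + 1)
    (hD1 : ∀ x : α, {z : α | x ⋖ z}.ncard = {y : α | y ⋖ x}.ncard + 1)
    (hD2 : ∀ x y : α, x ≠ y →
      {z : α | z ⋖ x ∧ z ⋖ y}.ncard = {z : α | x ⋖ z ∧ y ⋖ z}.ncard) :
    duMatZ rk 0 = 1 := by
  ext x y
  have hnone : {z : α | z ⋖ x.1 ∧ z ⋖ y.1} = ∅ :=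
    Set.eq_empty_of_forall_notMem fun z hz => by have := hgrade z x.1 hz.1; omega
  rw [duMatZ_apply_eq_ncard_add_one rk hgrade hD1 hD2, hnone, Set.ncard_empty, Nat.cast_zero,
    zero_add]

lemma duMatZ_succ (hgrade : ∀ x y : α, x ⋖ y → rk y = rk x + 1)
    (hD1 : ∀ x : α, {z : α | x ⋖ z}.ncard = {y : α | y ⋖ x}.ncard + 1)
    (hD2 : ∀ x y : α, x ≠ y →
      {z : α | z ⋖ x ∧ z ⋖ y}.ncard = {z : α | x ⋖ z ∧ y ⋖ z}.ncard) (r : ℕ) :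
    duMatZ rk (r + 1) = upMatZ rk r * (upMatZ rk r)ᵀ + 1 := by
  ext x y
  rw [duMatZ_apply_eq_ncard_add_one rk hgrade hD1 hD2, Matrix.add_apply,
    upMatZ_mul_transpose_apply rk hgrade]

lemma upOp_apply_of_rk_eq_zero (hgrade : ∀ x y : α, x ⋖ y → rk y = rk x + 1) (f : α → ℤ)
    {x : α} (hx : rk x = 0) : upOp rk f x = 0 :=
  Finset.sum_eq_zero fun w _ => if_neg fun h => by have := hgrade w.1 x h; omega

theorem downOp_mul_upOp (hgrade : ∀ x y : α, x ⋖ y → rk y = rk x + 1)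
    (hD1 : ∀ x : α, {z : α | x ⋖ z}.ncard = {y : α | y ⋖ x}.ncard + 1)
    (hD2 : ∀ x y : α, x ≠ y →
      {z : α | z ⋖ x ∧ z ⋖ y}.ncard = {z : α | x ⋖ z ∧ y ⋖ z}.ncard) :
    downOp rk * upOp rk = upOp rk * downOp rk + 1 := by
  refine LinearMap.ext fun f => funext fun x => ?_
  simp only [Module.End.mul_apply, LinearMap.add_apply, Module.End.one_apply, Pi.add_apply]
  obtain ⟨r, hr⟩ : ∃ r, rk x = r := ⟨_, rfl⟩
  have hDU := congrFun (rankPart_downOp_upOp rk r f) ⟨x, hr⟩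
  rcases r with _ | r
  · rw [duMatZ_zero rk hgrade hD1 hD2, one_mulVec] at hDU
    rw [upOp_apply_of_rk_eq_zero rk hgrade _ hr]
    simpa [rankPart_apply] using hDU
  · rw [duMatZ_succ rk hgrade hD1 hD2, add_mulVec, one_mulVec, ← mulVec_mulVec,
      ← rankPart_downOp, ← rankPart_upOp] at hDU
    exact hDU

lemma upOp_single (hgrade : ∀ x y : α, x ⋖ y → rk y = rk x + 1) (x t : α) :
    upOp rk (Pi.single x 1) t = if x ⋖ t then 1 else 0 := by
  rw [upOp_apply]
  split_ifs with hxt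
  · have hx : rk x = rk t - 1 := by have := hgrade x t hxt; omega
    rw [Finset.sum_eq_single ⟨x, hx⟩ (fun w _ hw => by
      rw [Pi.single_eq_of_ne (fun h => hw (Subtype.ext h)), ite_self]) (by simp)]
    simp [hxt]
  · exact Finset.sum_eq_zero fun w _ => by
      by_cases hw : w.1 = x
      · rw [if_neg (hw ▸ hxt)]
      · rw [Pi.single_eq_of_ne hw, ite_self]

lemma downOp_single (hgrade : ∀ x y : α, x ⋖ y → rk y = rk x + 1) (z t : α) :
    downOp rk (Pi.single z 1) t = if t ⋖ z then 1 else 0 := by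
  rw [downOp_apply]
  split_ifs with htz
  · rw [Finset.sum_eq_single ⟨z, hgrade t z htz⟩ (fun w _ hw => by
      rw [Pi.single_eq_of_ne (fun h => hw (Subtype.ext h)), ite_self]) (by simp)]
    simp [htz]
  · exact Finset.sum_eq_zero fun w _ => by
      by_cases hw : w.1 = z
      · rw [if_neg (hw ▸ htz)]
      · rw [Pi.single_eq_of_ne hw, ite_self]

lemma upOp_apply_of_coversExactly (hgrade : ∀ x y : α, x ⋖ y → rk y = rk x + 1) {z x : α}
    (h : CoversExactly z x) (f : α → ℤ) : upOp rk f z = f x := by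
  have hx : rk x = rk z - 1 := by have := hgrade x z h.1; omega
  rw [upOp_apply, Finset.sum_eq_single ⟨x, hx⟩ (fun w _ hw => if_neg fun hwz =>
    hw (Subtype.ext (h.2 _ hwz))) (by simp), if_pos h.1]

lemma downOp_single_of_coversExactly (hgrade : ∀ x y : α, x ⋖ y → rk y = rk x + 1) {z x : α}
    (h : CoversExactly z x) : downOp rk (Pi.single z 1) = Pi.single x 1 := by
  funext t
  rw [downOp_single rk hgrade]
  by_cases htx : t = x
  · rw [if_pos (htx ▸ h.1), htx, Pi.single_eq_same]
  · rw [if_neg fun htz => htx (h.2 t htz), Pi.single_eq_of_ne htx]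

lemma upOp_single_of_forall_covBy_eq (hgrade : ∀ x y : α, x ⋖ y → rk y = rk x + 1) {x z : α}
    (hxz : x ⋖ z) (huniq : ∀ t, x ⋖ t → t = z) : upOp rk (Pi.single x 1) = Pi.single z 1 := by
  funext t
  rw [upOp_single rk hgrade]
  by_cases htz : t = z
  · rw [if_pos (htz ▸ hxz), htz, Pi.single_eq_same]
  · rw [if_neg fun hxt => htz (huniq t hxt), Pi.single_eq_of_ne htz]

lemma upOp_pow_apply_of_coversExactly (hgrade : ∀ x y : α, x ⋖ y → rk y = rk x + 1)
    {X : ℕ → α} (hX : ∀ j, CoversExactly (X (j + 1)) (X j)) (f : α → ℤ) (m i : ℕ) :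
    (upOp rk ^ i) f (X (m + i)) = f (X m) := by
  induction i with
  | zero => rfl
  | succ i ih => rw [pow_succ', Module.End.mul_apply, ← add_assoc,
      upOp_apply_of_coversExactly rk hgrade (hX _), ih]

lemma finite_setOf_covBy (hgrade : ∀ x y : α, x ⋖ y → rk y = rk x + 1) (x : α) :
    {z | x ⋖ z}.Finite :=
  (Set.finite_range fun w : {w : α // rk w = rk x + 1} => w.1).subset
    fun z hz => ⟨⟨z, hgrade x z hz⟩, rfl⟩

lemma exists_covBy_covBy_of_covBy (hgrade : ∀ x y : α, x ⋖ y → rk y = rk x + 1)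
    (hD2 : ∀ x y : α, x ≠ y →
      {z : α | z ⋖ x ∧ z ⋖ y}.ncard = {z : α | x ⋖ z ∧ y ⋖ z}.ncard)
    {x u v : α} (hxv : x ⋖ v) (huv : u ⋖ v) (hux : u ≠ x) : ∃ c, c ⋖ x ∧ c ⋖ u := by
  have hpos : 0 < {z | x ⋖ z ∧ u ⋖ z}.ncard :=
    (Set.ncard_pos ((finite_setOf_covBy rk hgrade x).subset fun z hz => hz.1)).2 ⟨v, hxv, huv⟩
  rw [← hD2 x u hux.symm] at hpos
  exact Set.nonempty_of_ncard_ne_zero hpos.ne'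

lemma exists_coversExactly (hgrade : ∀ x y : α, x ⋖ y → rk y = rk x + 1)
    (hD1 : ∀ x : α, {z : α | x ⋖ z}.ncard = {y : α | y ⋖ x}.ncard + 1)
    (hD2 : ∀ x y : α, x ≠ y →
      {z : α | z ⋖ x ∧ z ⋖ y}.ncard = {z : α | x ⋖ z ∧ y ⋖ z}.ncard)
    {x w : α} (hxw : CoversExactly x w) (hw : {c | c ⋖ w}.ncard ≤ 1) :
    ∃ z, CoversExactly z x := by
  -- Otherwise every cover of `x` also covers the other cover `u` of `w`, so `x` and `u` have two
  -- common covers but only the common lower cover `w`.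
  by_contra! hno
  have hother : ∀ v, x ⋖ v → ∃ u, u ≠ x ∧ u ⋖ v ∧ w ⋖ u := by
    intro v hv
    obtain ⟨u, huv, hux⟩ : ∃ u, u ⋖ v ∧ u ≠ x := by
      by_contra! h
      exact hno v ⟨hv, h⟩
    obtain ⟨c, hcx, hcu⟩ := exists_covBy_covBy_of_covBy rk hgrade hD2 hv huv hux
    exact ⟨u, hux, huv, hxw.2 c hcx ▸ hcu⟩
  have huniq : ∀ u₁ u₂, u₁ ≠ x → u₂ ≠ x → w ⋖ u₁ → w ⋖ u₂ → u₁ = u₂ := by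
    intro u₁ u₂ hu₁ hu₂ hw₁ hw₂
    by_contra h12
    have hsub : ({x, u₁, u₂} : Set α) ⊆ {z | w ⋖ z} := by
      rintro z (rfl | rfl | rfl)
      exacts [hxw.1, hw₁, hw₂]
    have h3 := Set.ncard_le_ncard hsub (finite_setOf_covBy rk hgrade w)
    rw [Set.ncard_insert_of_notMem (by rintro (h | h) <;> simp_all), Set.ncard_pair h12,
      hD1 w] at h3
    omega
  have hcov : {z | x ⋖ z}.ncard = 2 := by
    rw [hD1 x, hxw.setOf_covBy_eq, Set.ncard_singleton]
  obtain ⟨v, hv⟩ := Set.nonempty_of_ncard_ne_zero (s := {z | x ⋖ z}) (by omega)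
  obtain ⟨u, hux, -, hwu⟩ := hother v hv
  have hcommon : {z | x ⋖ z ∧ u ⋖ z} = {z | x ⋖ z} := by
    refine Set.Subset.antisymm (fun z hz => hz.1) fun z hz => ⟨hz, ?_⟩
    obtain ⟨u', hu'x, hu'z, hwu'⟩ := hother z hz
    exact huniq u' u hu'x hux hwu' hwu ▸ hu'z
  have hlower : {z | z ⋖ x ∧ z ⋖ u}.ncard ≤ 1 :=
    (Set.ncard_le_ncard (t := {w}) fun c hc => hxw.2 c hc.1).trans (Set.ncard_singleton w).le
  rw [hD2 x u hux.symm, hcommon, hcov] at hlower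
  omega

lemma exists_chain_extending (hgrade : ∀ x y : α, x ⋖ y → rk y = rk x + 1)
    (hD1 : ∀ x : α, {z : α | x ⋖ z}.ncard = {y : α | y ⋖ x}.ncard + 1)
    (hD2 : ∀ x y : α, x ≠ y →
      {z : α | z ⋖ x ∧ z ⋖ y}.ncard = {z : α | x ⋖ z ∧ y ⋖ z}.ncard)
    {x w c : α} (hxw : CoversExactly x w) (hwc : CoversExactly w c) :
    ∃ X : ℕ → α, X 0 = c ∧ X 1 = w ∧ X 2 = x ∧ ∀ j, CoversExactly (X (j + 1)) (X j) := by
  let J : α → Prop := fun y => ∃ w, CoversExactly y w ∧ {c | c ⋖ w}.ncard ≤ 1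
  have step : ∀ y : {y // J y}, ∃ z : {y // J y}, CoversExactly z.1 y.1 := by
    rintro ⟨y, w, hyw, hw⟩
    obtain ⟨z, hz⟩ := exists_coversExactly rk hgrade hD1 hD2 hyw hw
    exact ⟨⟨z, y, hz, by rw [hyw.setOf_covBy_eq, Set.ncard_singleton]⟩, hz⟩
  choose f hf using step
  have hJx : J x := ⟨w, hxw, by rw [hwc.setOf_covBy_eq, Set.ncard_singleton]⟩
  let Z : ℕ → α := fun j => (f^[j] ⟨x, hJx⟩).1
  refine ⟨fun | 0 => c | 1 => w | j + 2 => Z j, rfl, rfl, rfl, ?_⟩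
  rintro (_ | _ | j)
  · exact hwc
  · exact hxw
  · simpa only [Z, Function.iterate_succ_apply'] using hf (f^[j] ⟨x, hJx⟩)

theorem exists_twin_chains [OrderBot α] (hbot : rk ⊥ = 0)
    (hgrade : ∀ x y : α, x ⋖ y → rk y = rk x + 1)
    (hdown : ∀ x : α, x ≠ ⊥ → ∃ y : α, y ⋖ x)
    (hD1 : ∀ x : α, {z : α | x ⋖ z}.ncard = {y : α | y ⋖ x}.ncard + 1)
    (hD2 : ∀ x y : α, x ≠ y →
      {z : α | z ⋖ x ∧ z ⋖ y}.ncard = {z : α | x ⋖ z ∧ y ⋖ z}.ncard) :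
    ∃ X Y : ℕ → α, (∀ j, CoversExactly (X (j + 1)) (X j)) ∧
      (∀ j, CoversExactly (Y (j + 1)) (Y j)) ∧ (∀ t, Y 0 ⋖ t → t = Y 1) ∧
      X 1 = Y 1 ∧ X 2 ≠ Y 2 ∧ ∀ j, rk (X j) = j := by
  have hbot_cov : {z : α | ⊥ ⋖ z}.ncard = 1 := by
    have hnone : {c : α | c ⋖ ⊥} = ∅ :=
      Set.eq_empty_of_forall_notMem fun c hc => not_lt_bot hc.lt
    rw [hD1, hnone, Set.ncard_empty]
  obtain ⟨a, ha⟩ := Set.ncard_eq_one.1 hbot_cov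
  have hba : a ∈ {z : α | ⊥ ⋖ z} := by rw [ha]; exact Set.mem_singleton a
  have hrk1 : ∀ u, rk u = 1 → u = a := by
    intro u hu
    obtain ⟨y, hy⟩ := hdown u fun h => by simp [h, hbot] at hu
    have hy0 : y = ⊥ := eq_bot_of_rk_eq_zero rk hgrade hdown (by have := hgrade y u hy; omega)
    have hu : u ∈ {z : α | ⊥ ⋖ z} := hy0 ▸ hy
    rwa [ha] at hu
  have ha_bot : CoversExactly a ⊥ := ⟨hba, fun u hu => eq_bot_of_rk_eq_zero rk hgrade hdown
    (by have := hgrade u a hu; rw [hgrade ⊥ a hba] at this; omega)⟩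
  have hb : ∀ b, a ⋖ b → CoversExactly b a := fun b hab => ⟨hab, fun u hu => hrk1 u (by
    have := hgrade u b hu; rw [hgrade a b hab, hgrade ⊥ a hba, hbot] at this; omega)⟩
  obtain ⟨b₁, b₂, hb12, hab⟩ : ∃ b₁ b₂, b₁ ≠ b₂ ∧ {z | a ⋖ z} = {b₁, b₂} := by
    rw [← Set.ncard_eq_two, hD1, ha_bot.setOf_covBy_eq, Set.ncard_singleton]
  have hab₁ : a ⋖ b₁ := (hab ▸ Set.mem_insert b₁ {b₂} : b₁ ∈ {z | a ⋖ z})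
  have hab₂ : a ⋖ b₂ := (hab ▸ Set.mem_insert_of_mem b₁ rfl : b₂ ∈ {z | a ⋖ z})
  obtain ⟨X, hX0, hX1, hX2, hX⟩ := exists_chain_extending rk hgrade hD1 hD2 (hb b₁ hab₁) ha_bot
  obtain ⟨Y, hY0, hY1, hY2, hY⟩ := exists_chain_extending rk hgrade hD1 hD2 (hb b₂ hab₂) ha_bot
  refine ⟨X, Y, hX, hY, fun t ht => ?_, hX1.trans hY1.symm, hX2 ▸ hY2 ▸ hb12, fun j => ?_⟩
  · rw [hY1, ← Set.mem_singleton_iff, ← ha]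
    exact hY0 ▸ ht
  · induction j with
    | zero => rw [hX0, hbot]
    | succ j ih => rw [hgrade _ _ (hX j).1, ih]

end GradedPoset

theorem genFac_mul_dvd_of_functional [PartialOrder α] (rk : α → ℕ)
    [∀ n : ℕ, Fintype {x : α // rk x = n}]
    (hgrade : ∀ x y : α, x ⋖ y → rk y = rk x + 1)
    (hD1 : ∀ x : α, {z : α | x ⋖ z}.ncard = {y : α | y ⋖ x}.ncard + 1)
    (hD2 : ∀ x y : α, x ≠ y →
      {z : α | z ⋖ x ∧ z ⋖ y}.ncard = {z : α | x ⋖ z ∧ y ⋖ z}.ncard)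
    {X Y : ℕ → α} (hX : ∀ j, CoversExactly (X (j + 1)) (X j))
    (hY : ∀ j, CoversExactly (Y (j + 1)) (Y j)) (hY0 : ∀ t, Y 0 ⋖ t → t = Y 1)
    (hXY1 : X 1 = Y 1) (hXY2 : X 2 ≠ Y 2) {k n : ℕ} (hn : 0 < n) {d : ℤ}
    (φ : (α → ℤ) →ₗ[ℤ] ℤ) (hφ : ∀ f, φ (downOp rk (upOp rk f) + (k : ℤ) • f) = d * f (X n)) :
    ((genFac 1 k (n - 1) * (n + 1 + k) : ℕ) : ℤ) ∣ d := by
  set ψ : ℕ → α → ℤ := fun i => (upOp rk ^ i) (Pi.single (Y (n - i)) 1) with hψ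
  have hψ_succ : ∀ i < n, downOp rk (upOp rk (ψ i)) = ψ (i + 1) + (i + 1) • ψ i := by
    intro i hi
    obtain ⟨j, hj⟩ : ∃ j, n - i = j + 1 := ⟨n - (i + 1), by omega⟩
    have h := LinearMap.congr_fun (mul_pow_succ_eq_of_mul_eq_mul_add_one
      (downOp_mul_upOp rk hgrade hD1 hD2) i) (Pi.single (Y (n - i)) 1)
    rw [pow_succ', Module.End.mul_apply, Module.End.mul_apply, LinearMap.add_apply,
      Module.End.mul_apply, LinearMap.smul_apply, hj,
      downOp_single_of_coversExactly rk hgrade (hY j), ← hj,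
      show j = n - (i + 1) by omega, ← pow_succ'] at h
    exact h
  have hψ_eval : ∀ i ≤ n, ψ i (X n) = if X (n - i) = Y (n - i) then 1 else 0 := by
    intro i hi
    have h := upOp_pow_apply_of_coversExactly rk hgrade hX (Pi.single (Y (n - i)) 1) (n - i) i
    rw [Nat.sub_add_cancel hi] at h
    exact h.trans (Pi.single_apply _ _ _)
  have hψ_last : ψ n = ψ (n - 1) := by
    obtain ⟨m, rfl⟩ : ∃ m, n = m + 1 := ⟨n - 1, by omega⟩
    simp only [hψ, Nat.sub_self, Nat.add_sub_cancel, Nat.add_sub_cancel_left, pow_succ,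
      Module.End.mul_apply, upOp_single_of_forall_covBy_eq rk hgrade (hY 0).1 hY0]
  refine genFac_mul_dvd_of_recurrence (β := fun i => φ (ψ i)) hn (fun i hi => ?_)
    (congrArg φ hψ_last)
  have h := hφ (ψ i)
  rw [hψ_succ i hi, hψ_eval i hi.le, map_add, map_add, map_nsmul, map_smul, nsmul_eq_mul,
    smul_eq_mul] at h
  rw [show φ (ψ (i + 1)) + (k + i + 1) * φ (ψ i) = d * if X (n - i) = Y (n - i) then 1 else 0 by
    push_cast at h; linear_combination h]
  by_cases hin : i + 1 = n
  · rw [if_pos hin, if_pos (by rw [show n - i = 1 by omega]; exact hXY1), mul_one]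
  · rw [if_neg hin, if_neg (ne_of_coversExactly_of_ne hX hY hXY2 (by omega)), mul_zero]

open Classical in
/-- For a `1`-differential poset and positive integers `k, n`,
`(n-1)!_{1,k} · (n+1+k)` divides the last Smith entry of `DU_n + kI`. -/
theorem genFac_mul_dvd_last_smith_entry_one_differential [PartialOrder α] [OrderBot α]
    (rk : α → ℕ) [∀ n : ℕ, Fintype {x : α // rk x = n}]
    (hbot : rk ⊥ = 0)
    (hgrade : ∀ x y : α, x ⋖ y → rk y = rk x + 1)
    (hdown : ∀ x : α, x ≠ ⊥ → ∃ y : α, y ⋖ x)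
    (hD1 : ∀ x : α, {z : α | x ⋖ z}.ncard = {y : α | y ⋖ x}.ncard + 1)
    (hD2 : ∀ x y : α, x ≠ y →
      {z : α | z ⋖ x ∧ z ⋖ y}.ncard = {z : α | x ⋖ z ∧ y ⋖ z}.ncard)
    (k n N : ℕ) (hk : 0 < k) (hn : 0 < n)
    (e : {x : α // rk x = n} ≃ Fin (N + 1))
    (P Q D : Matrix (Fin (N + 1)) (Fin (N + 1)) ℤ)
    (hP : IsUnit P.det) (hQ : IsUnit Q.det)
    (hPAQ : P * (Matrix.reindex e e (duMatZ rk n + (k : ℤ) • 1)) * Q = D)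
    (hdiag : ∀ i j : Fin (N + 1), i ≠ j → D i j = 0)
    (hnonneg : ∀ i : Fin (N + 1), 0 ≤ D i i)
    (hdvd : ∀ i j : Fin (N + 1), i ≤ j → D i i ∣ D j j) :
    ((genFac 1 k (n - 1) * (n + 1 + k) : ℕ) : ℤ) ∣ D (Fin.last N) (Fin.last N) := by
  obtain ⟨X, Y, hX, hY, hY0, hXY1, hXY2, hXrk⟩ := exists_twin_chains rk hbot hgrade hdown hD1 hD2
  set M := duMatZ rk n + (k : ℤ) • 1
  obtain ⟨B, hB⟩ := exists_mul_eq_smul_one_of_smith hP hPAQ hdiag fun i => hdvd i _ (Fin.le_last i)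
  set B' := (reindexAlgEquiv ℤ ℤ e).symm B
  have hMB : M * B' = D (Fin.last N) (Fin.last N) • 1 := by
    apply (reindexAlgEquiv ℤ ℤ e).injective
    rw [map_mul, AlgEquiv.apply_symm_apply, map_smul, map_one, coe_reindexAlgEquiv]
    exact hB
  have hM : M.IsSymm := (isSymm_duMatZ rk n).add (isSymm_one.smul _)
  let φ := (dotProductBilin ℤ ℤ).flip (B' *ᵥ Pi.single ⟨X n, hXrk n⟩ 1) ∘ₗ rankPart rk n
  refine genFac_mul_dvd_of_functional rk hgrade hD1 hD2 hX hY hY0 hXY1 hXY2 hn φ fun f => ?_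
  have hMf : rankPart rk n (downOp rk (upOp rk f) + (k : ℤ) • f) = M *ᵥ rankPart rk n f := by
    rw [map_add, map_smul, rankPart_downOp_upOp, add_mulVec, smul_mulVec, one_mulVec]
  simp only [φ, LinearMap.comp_apply, LinearMap.flip_apply, dotProductBilin_apply_apply, hMf,
    mulVec_dotProduct_mulVec_single hM hMB, rankPart_apply]
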